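/- For every winning agent strategy σ_a^F ∈ 𝔖_a on the knowledge-based game arena G there exists a positional winning agent strategy σ_a ∈ 𝔖_a such that cost_G(π_{σ_a,σ_e}) ≤ cost_G(π_{σ_a^F,σ_e}) for every environment strategy σ_e ∈ 𝔖_e; consequently reg_G^{σ_e}(σ_a) ≤ reg_G^{σ_e}(σ_a^F) for every σ_e ∈ 𝔖_e, and hence reg_G(σ_a) ≤ reg_G(σ_a^F). -/

import Mathlib

namespace RegretLTL

/-- A deterministic finite automaton over alphabet `2^AP`. -/
structure DFAut (Q AP : Type) where
  q0 : Q
  f : Q → Finset AP → Q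
  QF : Set Q

/-- A partially-known weighted transition system. -/
structure PKWTS (X AP : Type) where
  x0 : X
  Δ : X → Finset (Finset X)
  Δ_nonempty : ∀ x, (Δ x).Nonempty
  w : X → X → ℝ
  w_nonneg : ∀ x y, 0 ≤ w x y
  L : X → Finset AP
  x0_known : (Δ x0).card = 1

variable {X Q AP : Type} [DecidableEq X] [Fintype X] [Fintype Q] [Fintype AP]
  [Inhabited X] [Inhabited Q]

/-- The pattern recorded for `x` in a knowledge-set (junk value `∅` if absent). -/
def lookupO (K : List (X × Finset X)) (x : X) : Finset X :=
  ((K.find? (fun k => decide (k.1 = x))).map Prod.snd).getD ∅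

/-- `x` has been explored in the knowledge-set `K`, i.e. `x ∈ X(K)`. -/
def Explored (K : List (X × Finset X)) (x : X) : Prop := ∃ o, (x, o) ∈ K

/-- Knowledge-set update. -/
def kupdate (K : List (X × Finset X)) (κ : X × Finset X) : List (X × Finset X) :=
  if K.any (fun k => decide (k.1 = κ.1)) then K else K ++ [κ]

variable (M : PKWTS X AP) (D : DFAut Q AP) (K0 : List (X × Finset X))

/-- `K0` is the initial knowledge-set: it lists (in some fixed order) each known
state together with its unique successor pattern. -/
def IsInitK : Prop :=
  (K0.map Prod.fst).Nodup ∧ (∀ p ∈ K0, M.Δ p.1 = {p.2}) ∧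
    ∀ x : X, (M.Δ x).card = 1 → ∃ o, (x, o) ∈ K0

/-- A compatible environment `T ∈ 𝕋`, given by its transition function. -/
def CompatEnv := { δ : X → Finset X // ∀ x, δ x ∈ M.Δ x }

/-- A finite path of the environment with transition function `δ`, starting at `x0`. -/
def IsEnvPath (δ : X → Finset X) (ρ : List X) : Prop :=
  ρ ≠ [] ∧ ρ.head? = some M.x0 ∧ ρ.Chain' (fun a b => b ∈ δ a)

/-- Cost of a finite path. -/
def costP (ρ : List X) : ℝ := (List.zipWith M.w ρ ρ.tail).sum

/-- Run of the DFA on the labels of a sequence of states. -/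
def frun (q : Q) (xs : List X) : Q := xs.foldl (fun q x => D.f q (M.L x)) q

/-- The finite path `ρ = x0 x1 ⋯ xn` accomplishes the task:
`f(q0, L(x0)⋯L(x_{n-1})) ∈ QF`. -/
def Accomplishes (ρ : List X) : Prop :=
  ρ ≠ [] ∧ frun M D D.q0 ρ.dropLast ∈ D.QF

/-- A history of the PK-WTS. -/
def IsHistory (h : List (X × Finset X)) : Prop :=
  h ≠ [] ∧ (h.map Prod.fst).head? = some M.x0 ∧
  (∀ p ∈ h, p.2 ∈ M.Δ p.1) ∧
  h.Chain' (fun p p' => p'.1 ∈ p.2) ∧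
  ∀ p ∈ h, ∀ p' ∈ h, p.1 = p'.1 → p.2 = p'.2

/-- Validity of a strategy for the PK-WTS: it moves to a successor in the last
observed pattern, or stops. -/
def XiValid (ξ : List (X × Finset X) → Option X) : Prop :=
  ∀ h p x, IsHistory M h → h.getLast? = some p → ξ h = some x → x ∈ p.2

/-- The history induced from a path in a fixed environment. -/
def histOf (δ : X → Finset X) (ρ : List X) : List (X × Finset X) :=
  ρ.map (fun x => (x, δ x))

/-- `ρ` is the outcome path `ρ^T_ξ` of strategy `ξ` in environment `δ`. -/
def IsOutcomePath (ξ : List (X × Finset X) → Option X) (δ : X → Finset X)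
    (ρ : List X) : Prop :=
  IsEnvPath M δ ρ ∧
  (∀ i (h : i + 1 < ρ.length),
    ξ (histOf δ (ρ.take (i+1))) = some (ρ[i+1]'h)) ∧
  ξ (histOf δ ρ) = none

open Classical in
/-- The outcome path `ρ^T_ξ` (junk `[]` if it does not exist). -/
noncomputable def outcomePath (ξ : List (X × Finset X) → Option X)
    (T : CompatEnv M) : List X :=
  if h : ∃ ρ, IsOutcomePath M ξ T.1 ρ then h.choose else []

/-- `Stra_A(𝕋)`: strategies whose outcome path exists and accomplishes the task in
every compatible environment. -/
def StraA : Set (List (X × Finset X) → Option X) :=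
  { ξ | XiValid M ξ ∧
      ∀ T : CompatEnv M, ∃ ρ, IsOutcomePath M ξ T.1 ρ ∧ Accomplishes M D ρ }

/-- The regret of a strategy `ξ` in the partially-known environment `𝕋`. -/
noncomputable def regT (ξ : List (X × Finset X) → Option X) : ℝ :=
  sSup { r | ∃ T : CompatEnv M,
    costP M (outcomePath M ξ T) -
      sInf { c | ∃ ξ' ∈ StraA M D, costP M (outcomePath M ξ' T) = c } = r }

/-- Vertices of the knowledge-based game arena. -/
inductive Vtx (X Q : Type) where
  | ag (x : X) (q : Q) (K : List (X × Finset X))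
  | env (x : X) (q : Q) (K : List (X × Finset X)) (xh : X)

instance : Inhabited (Vtx X Q) := ⟨.ag default default []⟩

def IsAgV : Vtx X Q → Prop
  | .ag _ _ _ => True
  | _ => False

def IsEnvV : Vtx X Q → Prop
  | .env _ _ _ _ => True
  | _ => False

/-- Knowledge-set component of a vertex. -/
def Kof : Vtx X Q → List (X × Finset X)
  | .ag _ _ K => K
  | .env _ _ K _ => K

/-- The fourth (target-state) component of an environment vertex. -/
def tgtOf : Vtx X Q → Option X
  | .env _ _ _ xh => some xh
  | _ => none

/-- Edges of the knowledge-based game arena. -/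
def Edge : Vtx X Q → Vtx X Q → Prop
  | .ag x q K, .env x' q' K' xh =>
      x' = x ∧ q' = q ∧ K' = K ∧ Explored K x ∧ xh ∈ lookupO K x
  | .env xe qe Ke xh, .ag xa qa Ka =>
      xa = xh ∧ qa = D.f qe (M.L xe) ∧ ∃ o ∈ M.Δ xa, Ka = kupdate Ke (xa, o)
  | _, _ => False

/-- Initial vertex of the arena. -/
def v0 : Vtx X Q := .ag M.x0 D.q0 K0

/-- Weight function of the arena. -/
def wG : Vtx X Q → Vtx X Q → ℝ
  | .env xe _ _ _, .ag xa _ _ => M.w xe xa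
  | _, _ => 0

/-- A play: a finite directed path in the arena starting at `v0`. -/
def IsPlay (π : List (Vtx X Q)) : Prop :=
  π.head? = some (v0 M D K0) ∧ π.Chain' (Edge M D)

/-- Cost of a play. -/
def costG (π : List (Vtx X Q)) : ℝ := (List.zipWith (wG M) π π.tail).sum

/-- Accepting (final) vertices `V_F`. -/
def InVF : Vtx X Q → Prop
  | Vtx.ag _ q _ => q ∈ D.QF
  | _ => False

/-- Validity of an agent strategy: along plays ending at an agent vertex, it
either stops or moves along an edge of the arena. -/
def AValid (σa : List (Vtx X Q) → Option (Vtx X Q)) : Prop :=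
  ∀ π u v, IsPlay M D K0 π → π.getLast? = some u → IsAgV u → σa π = some v →
    Edge M D u v

/-- Validity of a (positional) environment strategy: it moves along edges of the
arena, and it reveals the same successor pattern whenever the same unexplored
state is entered. This defines membership in `𝔖_e`. -/
def EValid (σe : Vtx X Q → Vtx X Q) : Prop :=
  (∀ v, IsEnvV v → Edge M D v (σe v)) ∧
  (∀ (x : X) (q : Q) (K : List (X × Finset X)) (x' : X) (q' : Q)
      (K' : List (X × Finset X)) (xh : X),
    ¬ Explored K xh → ¬ Explored K' xh →
    lookupO (Kof (σe (.env x q K xh))) xh = lookupO (Kof (σe (.env x' q' K' xh))) xh)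

/-- The set `𝔖_e` of environment strategies. -/
def SE : Set (Vtx X Q → Vtx X Q) := { σe | EValid M D σe }

/-- `π` is the outcome play `π_{σa,σe}`. -/
def IsOutcome (σa : List (Vtx X Q) → Option (Vtx X Q)) (σe : Vtx X Q → Vtx X Q)
    (π : List (Vtx X Q)) : Prop :=
  IsPlay M D K0 π ∧
  (∀ i (h : i + 1 < π.length),
    (IsAgV (π[i]'(Nat.lt_of_succ_lt h)) → σa (π.take (i+1)) = some (π[i+1]'h)) ∧
    (IsEnvV (π[i]'(Nat.lt_of_succ_lt h)) → σe (π[i]'(Nat.lt_of_succ_lt h)) = π[i+1]'h)) ∧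
  IsAgV π.getLast! ∧ σa π = none

open Classical in
/-- The outcome play `π_{σa,σe}` (junk `[]` if it does not exist). -/
noncomputable def outcome (σa : List (Vtx X Q) → Option (Vtx X Q))
    (σe : Vtx X Q → Vtx X Q) : List (Vtx X Q) :=
  if h : ∃ π, IsOutcome M D K0 σa σe π then h.choose else []

/-- The set `𝔖_a` of winning agent strategies. -/
def SA : Set (List (Vtx X Q) → Option (Vtx X Q)) :=
  { σa | AValid M D K0 σa ∧
      ∀ σe ∈ SE M D, ∃ π, IsOutcome M D K0 σa σe π ∧ InVF D π.getLast! }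

/-- `min_{σa' ∈ 𝔖_a} cost_G(π_{σa',σe})`. -/
noncomputable def bestCost (σe : Vtx X Q → Vtx X Q) : ℝ :=
  sInf { c | ∃ σa ∈ SA M D K0, costG M (outcome M D K0 σa σe) = c }

/-- The regret `reg_G^{σe}(σa)` of `σa` against `σe`. -/
noncomputable def regAgainst (σa : List (Vtx X Q) → Option (Vtx X Q))
    (σe : Vtx X Q → Vtx X Q) : ℝ :=
  costG M (outcome M D K0 σa σe) - bestCost M D K0 σe

/-- The regret `reg_G(σa)`. -/
noncomputable def regG (σa : List (Vtx X Q) → Option (Vtx X Q)) : ℝ :=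
  sSup { r | ∃ σe ∈ SE M D, regAgainst M D K0 σa σe = r }

/-- Positional agent strategies. -/
def PositionalA (σa : List (Vtx X Q) → Option (Vtx X Q)) : Prop :=
  ∀ π π' : List (Vtx X Q), π.getLast? = π'.getLast? → σa π = σa π'

/-- `T ∈ 𝕋_K`. -/
def InTK (K : List (X × Finset X)) (T : CompatEnv M) : Prop :=
  ∀ p ∈ K, T.1 p.1 = p.2

/-- Best response `br(K)`. -/
noncomputable def br (K : List (X × Finset X)) : ℝ :=
  sInf { c | ∃ T : CompatEnv M, InTK M K T ∧
    ∃ ρ, IsEnvPath M T.1 ρ ∧ Accomplishes M D ρ ∧ costP M ρ = c }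

/-- Minimum cost of a play from `v0` to `v`. -/
noncomputable def SPcost (v : Vtx X Q) : ℝ :=
  sInf { c | ∃ π, IsPlay M D K0 π ∧ π.getLast? = some v ∧ costG M π = c }

/-- The edge `(u,v)` occurs on the play `π`. -/
def EdgeOn (u v : Vtx X Q) (π : List (Vtx X Q)) : Prop := (u, v) ∈ π.zip π.tail

/-- `(u,v) ∈ E_SP`: `(u,v)` lies on a minimum-cost play from `v0` to `V_F`. -/
def inESP (u v : Vtx X Q) : Prop :=
  ∃ π vf, IsPlay M D K0 π ∧ π.getLast? = some vf ∧ InVF D vf ∧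
    costG M π = SPcost M D K0 vf ∧ EdgeOn u v π

open Classical in
/-- The modified weight function `μ`, with values in `EReal`. -/
noncomputable def mu (u v : Vtx X Q) : EReal :=
  if IsEnvV u ∧ IsAgV v then
    (if inESP M D K0 u v then
      (if InVF D v then (((SPcost M D K0 v - br M D (Kof v) : ℝ)) : EReal) else 0)
     else ⊤)
  else 0

/-- Cost of a play with respect to `μ`. -/
noncomputable def costMu (π : List (Vtx X Q)) : EReal :=
  (List.zipWith (mu M D K0) π π.tail).sum

open Classical in
/-- `Val^μ(σa)`. -/
noncomputable def Valmu (σa : List (Vtx X Q) → Option (Vtx X Q)) : EReal :=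
  if AValid M D K0 σa ∧
     (∀ σe ∈ SE M D, ∃ π, IsOutcome M D K0 σa σe π ∧ InVF D π.getLast!)
  then sSup { c : EReal | ∃ σe ∈ SE M D, costMu M D K0 (outcome M D K0 σa σe) = c }
  else ⊤

/-- The environment strategy `σ_e^T` induced by a compatible environment `T`. -/
def envOf (T : CompatEnv M) : Vtx X Q → Vtx X Q
  | .env x q K xh => .ag xh (D.f q (M.L x)) (kupdate K (xh, T.1 xh))
  | v => v

/-- Best responses are achievable: for every compatible `T`, the best cost against
`σ_e^T` in the arena equals the minimum cost of a path of `T` accomplishing the task. -/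
def BRAchievable : Prop :=
  ∀ T : CompatEnv M,
    bestCost M D K0 (envOf M D T) =
      sInf { c | ∃ ρ, IsEnvPath M T.1 ρ ∧ Accomplishes M D ρ ∧ costP M ρ = c }

/-- The sequence of `X`-components of the agent vertices of a play. -/
def agentStates (π : List (Vtx X Q)) : List X :=
  π.filterMap (fun v => match v with | .ag x _ _ => some x | _ => none)

/-- The history induced by a complete play. -/
def inducedHist (π : List (Vtx X Q)) : List (X × Finset X) :=
  π.filterMap (fun v => match v with | .ag x _ K => some (x, lookupO K x) | _ => none)

/-- A branching environment vertex: at least two outgoing edges. -/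
def Branching (v : Vtx X Q) : Prop :=
  IsEnvV v ∧ ∃ u1 u2, u1 ≠ u2 ∧ Edge M D v u1 ∧ Edge M D v u2

open Classical in
/-- The sublist of branching environment vertices of a play, in order. -/
noncomputable def branchList (π : List (Vtx X Q)) : List (Vtx X Q) :=
  π.filter (fun v => decide (Branching M D v))


/-! ### Auxiliary development for STATEMENT 7 -/

section Aux

open Classical
set_option linter.unusedSectionVars false

variable {X Q : Type} [DecidableEq X] [Inhabited X] [Inhabited Q]

/-! #### basic list/knowledge lemmas -/

lemma explored_iff_any (K : List (X × Finset X)) (x : X) :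
    (K.any (fun k => decide (k.1 = x)) = true) ↔ Explored K x := by
  simp only [List.any_eq_true, decide_eq_true_eq, Explored]
  constructor
  · rintro ⟨p, hp, hx⟩; exact ⟨p.2, by rw [← hx]; simpa using hp⟩
  · rintro ⟨o, ho⟩; exact ⟨(x, o), ho, rfl⟩

lemma kupdate_of_explored {K : List (X × Finset X)} {x : X} (h : Explored K x)
    (o : Finset X) : kupdate K (x, o) = K := by
  unfold kupdate
  rw [if_pos ((explored_iff_any K x).2 h)]

lemma kupdate_of_not_explored {K : List (X × Finset X)} {x : X} (h : ¬ Explored K x)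
    (o : Finset X) : kupdate K (x, o) = K ++ [(x, o)] := by
  unfold kupdate
  rw [if_neg (fun hc => h ((explored_iff_any K x).1 hc))]

lemma mem_kupdate_of_mem {K : List (X × Finset X)} {p κ : X × Finset X} (h : p ∈ K) :
    p ∈ kupdate K κ := by
  unfold kupdate
  split <;> simp [h]

lemma mem_kupdate {K : List (X × Finset X)} {p κ : X × Finset X}
    (h : p ∈ kupdate K κ) : p ∈ K ∨ p = κ := by
  unfold kupdate at h
  split at h
  · exact Or.inl h
  · rcases List.mem_append.1 h with h | h
    · exact Or.inl h
    · simp at h; exact Or.inr h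

lemma not_explored_find?_eq_none {K : List (X × Finset X)} {x : X}
    (h : ¬ Explored K x) : K.find? (fun k => decide (k.1 = x)) = none := by
  rw [List.find?_eq_none]
  rintro p hp hpx
  simp at hpx
  exact h ⟨p.2, by rw [← hpx]; simpa using hp⟩

lemma lookupO_append_not_explored {K : List (X × Finset X)} {x : X}
    (h : ¬ Explored K x) (o : Finset X) : lookupO (K ++ [(x, o)]) x = o := by
  unfold lookupO
  rw [List.find?_append, not_explored_find?_eq_none h]
  simp

end Aux
section Aux2
open Classical
set_option linter.unusedSectionVars false

variable {X Q AP : Type} [DecidableEq X] [Fintype X] [Fintype Q] [Fintype AP]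
  [Inhabited X] [Inhabited Q]
variable (M : PKWTS X AP) (D : DFAut Q AP) (K0 : List (X × Finset X))

/-! #### generic list helpers -/

lemma chain'_getElem {α : Type*} {R : α → α → Prop} {l : List α} (h : l.Chain' R)
    {i : ℕ} (hi : i + 1 < l.length) : R (l[i]'(Nat.lt_of_succ_lt hi)) (l[i+1]'hi) := by
  have := List.isChain_iff_getElem.1 h i (by omega)
  simpa [List.get_eq_getElem] using this

lemma getLast!_eq_getElem {α : Type*} [Inhabited α] {l : List α} (h : l ≠ []) :
    l.getLast! = l[l.length - 1]'(by have := List.length_pos_iff.2 h; omega) := by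
  have hl : 0 < l.length := List.length_pos_iff.2 h
  rw [List.getLast!_eq_getElem!, getElem!_pos l (l.length - 1) (by omega)]

lemma take1_of_head? {α : Type*} {l : List α} {a : α} (h : l.head? = some a) :
    l.take 1 = [a] := by
  cases l with
  | nil => simp at h
  | cons b t => simp at h; simp [h]

lemma take_succ_getElem {α : Type*} {l : List α} {i : ℕ} (h : i < l.length) :
    l.take (i+1) = l.take i ++ [l[i]] := by
  rw [List.take_succ, List.getElem?_eq_getElem h]
  rfl

lemma getLast?_take {α : Type*} {l : List α} {i : ℕ} (h : i < l.length) :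
    (l.take (i+1)).getLast? = some (l[i]'h) := by
  rw [List.getLast?_eq_getElem?]
  have hlen : (l.take (i+1)).length = i+1 := by rw [List.length_take]; omega
  rw [hlen]
  simp only [Nat.add_sub_cancel]
  rw [List.getElem?_take_of_lt (by omega : i < i + 1)]
  exact List.getElem?_eq_getElem h

lemma head?_eq_getElem0 {α : Type*} {l : List α} {a : α} (h : l.head? = some a) :
    ∃ h0 : 0 < l.length, l[0]'h0 = a := by
  cases l with
  | nil => simp at h
  | cons b t => simp at h; exact ⟨by simp, by simpa using h⟩

/-! #### vertex kinds -/

lemma agV_elim {v : Vtx X Q} (h : IsAgV v) : ∃ x q K, v = Vtx.ag x q K := by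
  cases v with
  | ag x q K => exact ⟨x, q, K, rfl⟩
  | env x q K xh => exact absurd h (by simp [IsAgV])

lemma envV_elim {v : Vtx X Q} (h : IsEnvV v) : ∃ x q K xh, v = Vtx.env x q K xh := by
  cases v with
  | ag x q K => exact absurd h (by simp [IsEnvV])
  | env x q K xh => exact ⟨x, q, K, xh, rfl⟩

lemma agV_or_envV (v : Vtx X Q) : IsAgV v ∨ IsEnvV v := by
  cases v with
  | ag x q K => exact Or.inl trivial
  | env x q K xh => exact Or.inr trivial

/-! #### edges -/

lemma edge_from_ag {x q K} {v : Vtx X Q} (h : Edge M D (Vtx.ag x q K) v) :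
    IsEnvV v ∧ Kof v = K ∧ ¬ IsAgV v := by
  cases v with
  | ag x' q' K' => exact absurd h (by simp [Edge])
  | env x' q' K' xh => exact ⟨trivial, h.2.2.1, by simp [IsAgV]⟩

lemma edge_from_env {x q K xh} {v : Vtx X Q} (h : Edge M D (Vtx.env x q K xh) v) :
    IsAgV v ∧ ¬ IsEnvV v ∧ ∃ o ∈ M.Δ xh, v = Vtx.ag xh (D.f q (M.L x)) (kupdate K (xh, o)) := by
  cases v with
  | ag x' q' K' =>
    obtain ⟨h1, h2, o, ho, h3⟩ := h
    subst h1
    exact ⟨trivial, by simp [IsEnvV], ⟨o, ho, by rw [h2, h3]⟩⟩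
  | env x' q' K' xh' => exact absurd h (by simp [Edge])

lemma kof_mono_edge {u v : Vtx X Q} (h : Edge M D u v) {p : X × Finset X}
    (hp : p ∈ Kof u) : p ∈ Kof v := by
  cases u with
  | ag x q K =>
    obtain ⟨_, hK, _⟩ := edge_from_ag M D h
    rw [hK]; exact hp
  | env x q K xh =>
    obtain ⟨_, _, o, _, hv⟩ := edge_from_env M D h
    rw [hv]; exact mem_kupdate_of_mem hp

lemma kof_mono_play {π : List (Vtx X Q)} (h : π.Chain' (Edge M D)) {i j : ℕ}
    (hij : i ≤ j) (hj : j < π.length) {p : X × Finset X}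
    (hp : p ∈ Kof (π[i]'(lt_of_le_of_lt hij hj))) : p ∈ Kof (π[j]'hj) := by
  induction j with
  | zero =>
    have : i = 0 := by omega
    subst this; exact hp
  | succ k ih =>
    rcases Nat.lt_or_ge i (k+1) with hlt | hge
    · have hk : k < π.length := by omega
      exact kof_mono_edge M D (chain'_getElem h hj) (ih (by omega) hk hp)
    · have : i = k + 1 := by omega
      subst this; exact hp

/-! #### weights/cost -/

lemma wG_nonneg (u v : Vtx X Q) : 0 ≤ wG M u v := by
  cases u with
  | ag x q K => cases v <;> simp [wG]
  | env x q K xh => cases v <;> simp [wG, M.w_nonneg]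

@[simp] lemma costG_nil : costG M ([] : List (Vtx X Q)) = 0 := rfl

@[simp] lemma costG_singleton (a : Vtx X Q) : costG M [a] = 0 := rfl

lemma costG_cons_cons (a b : Vtx X Q) (l : List (Vtx X Q)) :
    costG M (a :: b :: l) = wG M a b + costG M (b :: l) := by
  simp [costG]

lemma costG_nonneg (l : List (Vtx X Q)) : 0 ≤ costG M l := by
  induction l with
  | nil => simp
  | cons a t ih =>
    cases t with
    | nil => simp
    | cons b s =>
      rw [costG_cons_cons]
      exact add_nonneg (wG_nonneg M _ _) ih

lemma zipW_take_tail (l : List (Vtx X Q)) (m : ℕ) :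
    List.zipWith (wG M) (l.take (m+1)) ((l.take (m+1)).tail) =
      (List.zipWith (wG M) l l.tail).take m := by
  induction l generalizing m with
  | nil => simp
  | cons a t ih =>
    cases t with
    | nil => simp
    | cons b s =>
      cases m with
      | zero => simp
      | succ k =>
        have hih := ih k
        simp only [List.take_succ_cons, List.tail_cons, List.zipWith_cons_cons] at hih ⊢
        rw [hih]

lemma costG_take_eq (l : List (Vtx X Q)) (m : ℕ) :
    costG M (l.take (m+1)) = ((List.zipWith (wG M) l l.tail).take m).sum := by
  unfold costG
  rw [zipW_take_tail]

lemma zipW_mem_nonneg : ∀ (as bs : List (Vtx X Q)), ∀ x ∈ List.zipWith (wG M) as bs, 0 ≤ x := by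
  intro as
  induction as with
  | nil => simp
  | cons a t ih =>
    intro bs x hx
    cases bs with
    | nil => simp at hx
    | cons b s =>
      simp only [List.zipWith_cons_cons, List.mem_cons] at hx
      rcases hx with rfl | hx
      · exact wG_nonneg M a b
      · exact ih s x hx

lemma costG_take_le (l : List (Vtx X Q)) (n : ℕ) : costG M (l.take n) ≤ costG M l := by
  cases n with
  | zero => simpa using costG_nonneg M l
  | succ m =>
    rw [costG_take_eq]
    show _ ≤ (List.zipWith (wG M) l l.tail).sum
    set W := List.zipWith (wG M) l l.tail with hW
    calc (W.take m).sum ≤ (W.take m).sum + (W.drop m).sum := by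
          have : 0 ≤ (W.drop m).sum :=
            List.sum_nonneg (fun x hx => zipW_mem_nonneg M l l.tail x ((List.drop_sublist m W).subset hx))
          linarith
      _ = W.sum := by rw [← List.sum_append, List.take_append_drop]

lemma costG_take_succ {l : List (Vtx X Q)} {i : ℕ} (h : i + 1 < l.length) :
    costG M (l.take (i+2)) = costG M (l.take (i+1)) +
      wG M (l[i]'(Nat.lt_of_succ_lt h)) (l[i+1]'h) := by
  rw [costG_take_eq, costG_take_eq]
  have hiW : i < (List.zipWith (wG M) l l.tail).length := by
    rw [List.length_zipWith, List.length_tail]; omega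
  rw [take_succ_getElem hiW, List.sum_append]
  simp only [List.sum_cons, List.sum_nil, add_zero]
  congr 1
  rw [List.getElem_zipWith]
  congr 1
  simp [List.getElem_tail]

end Aux2
section Aux3
open Classical
set_option linter.unusedSectionVars false

variable {X Q AP : Type} [DecidableEq X] [Fintype X] [Fintype Q] [Fintype AP]
  [Inhabited X] [Inhabited Q]
variable (M : PKWTS X AP) (D : DFAut Q AP) (K0 : List (X × Finset X))

lemma length_pos_of_head? {α : Type*} {l : List α} {a : α} (h : l.head? = some a) :
    0 < l.length := by
  cases l with
  | nil => simp at h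
  | cons b t => simp

lemma getElem_eq_of_take_eq {α : Type*} {l1 l2 : List α} {m i : ℕ}
    (h : l1.take m = l2.take m) (him : i < m) (h1 : i < l1.length) (h2 : i < l2.length) :
    l1[i]'h1 = l2[i]'h2 := by
  have e1 : l1[i]? = (l1.take m)[i]? := (List.getElem?_take_of_lt him).symm
  have e2 : l2[i]? = (l2.take m)[i]? := (List.getElem?_take_of_lt him).symm
  have : l1[i]? = l2[i]? := by rw [e1, e2, h]
  rw [List.getElem?_eq_getElem h1, List.getElem?_eq_getElem h2] at this
  exact Option.some.inj this

/-! #### environment strategies -/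

lemma lookupO_single (x : X) (o : Finset X) : lookupO [(x, o)] x = o := by
  have : ¬ Explored ([] : List (X × Finset X)) x := by
    rintro ⟨o', ho'⟩; simp at ho'
  simpa using lookupO_append_not_explored this o

lemma not_explored_nil (x : X) : ¬ Explored ([] : List (X × Finset X)) x := by
  rintro ⟨o', ho'⟩; simp at ho'

lemma envOf_mem_SE (T : CompatEnv M) : envOf M D T ∈ SE M D := by
  constructor
  · intro v hv
    obtain ⟨x, q, K, xh, rfl⟩ := envV_elim hv
    exact ⟨rfl, rfl, T.1 xh, T.2 xh, rfl⟩
  · intro x q K x' q' K' xh h1 h2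
    show lookupO (Kof (Vtx.ag xh _ (kupdate K (xh, T.1 xh)))) xh
        = lookupO (Kof (Vtx.ag xh _ (kupdate K' (xh, T.1 xh)))) xh
    rw [show Kof (Vtx.ag (X := X) (Q := Q) xh (D.f q (M.L x)) (kupdate K (xh, T.1 xh)))
        = kupdate K (xh, T.1 xh) from rfl]
    rw [show Kof (Vtx.ag (X := X) (Q := Q) xh (D.f q' (M.L x')) (kupdate K' (xh, T.1 xh)))
        = kupdate K' (xh, T.1 xh) from rfl]
    rw [kupdate_of_not_explored h1, kupdate_of_not_explored h2,
      lookupO_append_not_explored h1, lookupO_append_not_explored h2]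

noncomputable def cOf (σe : Vtx X Q → Vtx X Q) (hσe : σe ∈ SE M D) : CompatEnv M := by
  refine ⟨fun x => lookupO (Kof (σe (Vtx.env default default [] x))) x, fun x => ?_⟩
  show lookupO (Kof (σe (Vtx.env default default [] x))) x ∈ M.Δ x
  have hE := hσe.1 (Vtx.env default default [] x) trivial
  obtain ⟨_, _, o, ho, hv⟩ := edge_from_env M D hE
  rw [hv]
  show lookupO (kupdate [] (x, o)) x ∈ M.Δ x
  rw [kupdate_of_not_explored (not_explored_nil x), List.nil_append, lookupO_single]
  exact ho

lemma se_eq_envOf {σe : Vtx X Q → Vtx X Q} (hσe : σe ∈ SE M D) (v : Vtx X Q)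
    (hv : IsEnvV v) : σe v = envOf M D (cOf M D σe hσe) v := by
  obtain ⟨x, q, K, xh, rfl⟩ := envV_elim hv
  have hE := hσe.1 (Vtx.env x q K xh) trivial
  obtain ⟨_, _, o, ho, hveq⟩ := edge_from_env M D hE
  rw [hveq]
  show _ = Vtx.ag xh (D.f q (M.L x)) (kupdate K (xh, (cOf M D σe hσe).1 xh))
  by_cases hex : Explored K xh
  · rw [kupdate_of_explored hex, kupdate_of_explored hex]
  · have key := hσe.2 x q K default default [] xh hex (not_explored_nil xh)
    rw [hveq] at key
    have hL : lookupO (Kof (Vtx.ag xh (D.f q (M.L x)) (kupdate K (xh, o)))) xh = o := by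
      show lookupO (kupdate K (xh, o)) xh = o
      rw [kupdate_of_not_explored hex, lookupO_append_not_explored hex]
    rw [hL] at key
    show Vtx.ag xh (D.f q (M.L x)) (kupdate K (xh, o)) = _
    rw [show (cOf M D σe hσe).1 xh
        = lookupO (Kof (σe (Vtx.env default default [] xh))) xh from rfl, ← key]

lemma isOutcome_congr {σa : List (Vtx X Q) → Option (Vtx X Q)}
    {σe σe' : Vtx X Q → Vtx X Q} (h : ∀ v, IsEnvV v → σe v = σe' v)
    {π : List (Vtx X Q)} :
    IsOutcome M D K0 σa σe π ↔ IsOutcome M D K0 σa σe' π := by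
  unfold IsOutcome
  constructor
  · rintro ⟨hp, hstep, hrest⟩
    refine ⟨hp, fun i hi => ⟨(hstep i hi).1, fun henv => ?_⟩, hrest⟩
    rw [← h _ henv]; exact (hstep i hi).2 henv
  · rintro ⟨hp, hstep, hrest⟩
    refine ⟨hp, fun i hi => ⟨(hstep i hi).1, fun henv => ?_⟩, hrest⟩
    rw [h _ henv]; exact (hstep i hi).2 henv

/-! #### uniqueness of outcomes -/

lemma outcome_take_eq {σa : List (Vtx X Q) → Option (Vtx X Q)}
    {σe : Vtx X Q → Vtx X Q} {π1 π2 : List (Vtx X Q)}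
    (h1 : IsOutcome M D K0 σa σe π1) (h2 : IsOutcome M D K0 σa σe π2) :
    ∀ m, 1 ≤ m → m ≤ π1.length → m ≤ π2.length → π1.take m = π2.take m := by
  intro m
  induction m with
  | zero => intro h; omega
  | succ k ih =>
    intro _ hk1 hk2
    rcases Nat.eq_zero_or_pos k with rfl | hkpos
    · rw [take1_of_head? h1.1.1, take1_of_head? h2.1.1]
    · obtain ⟨i, rfl⟩ : ∃ i, k = i + 1 := ⟨k - 1, by omega⟩
      have htk := ih (by omega) (by omega) (by omega)
      have hi1 : i + 1 < π1.length := by omega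
      have hi2 : i + 1 < π2.length := by omega
      have hElem : π1[i]'(by omega) = π2[i]'(by omega) :=
        getElem_eq_of_take_eq htk (by omega) (by omega) (by omega)
      have hnext : π1[i+1]'hi1 = π2[i+1]'hi2 := by
        rcases agV_or_envV (π1[i]'(by omega)) with hag | henv
        · have s1 := (h1.2.1 i hi1).1 hag
          have s2 := (h2.2.1 i hi2).1 (by rw [← hElem]; exact hag)
          rw [htk] at s1
          rw [s1] at s2
          exact Option.some.inj s2
        · have s1 := (h1.2.1 i hi1).2 henv
          have s2 := (h2.2.1 i hi2).2 (by rw [← hElem]; exact henv)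
          rw [hElem] at s1
          rw [s1] at s2
          exact s2
      rw [take_succ_getElem (l := π1) (by omega), take_succ_getElem (l := π2) (by omega),
        htk, hnext]

lemma outcome_not_lt {σa : List (Vtx X Q) → Option (Vtx X Q)}
    {σe : Vtx X Q → Vtx X Q} {π1 π2 : List (Vtx X Q)}
    (h1 : IsOutcome M D K0 σa σe π1) (h2 : IsOutcome M D K0 σa σe π2) :
    ¬ (π1.length < π2.length) := by
  intro hlt
  have hpos : 0 < π1.length := length_pos_of_head? h1.1.1
  have hne : π1 ≠ [] := by intro h; rw [h] at hpos; simp at hpos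
  obtain ⟨k, hk⟩ : ∃ k, π1.length = k + 1 := ⟨π1.length - 1, by omega⟩
  have htk := outcome_take_eq M D K0 h1 h2 π1.length hpos (le_refl _) (le_of_lt hlt)
  have hπ1 : π1 = π2.take π1.length := by rw [← htk, List.take_length]
  have hlast := h1.2.2.1
  rw [getLast!_eq_getElem hne] at hlast
  have hlast' : IsAgV (π1[k]'(by omega)) := by
    have e : π1[k]'(by omega) = π1[π1.length - 1]'(by omega) :=
      getElem_congr_idx (by omega)
    rw [e]
    exact hlast
  have hElem : π1[k]'(by omega) = π2[k]'(by omega) :=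
    getElem_eq_of_take_eq htk (by omega) (by omega) (by omega)
  have s2 := (h2.2.1 k (by omega)).1 (by rw [← hElem]; exact hlast')
  have hTk : π2.take (k+1) = π1 := by rw [← hk, ← hπ1]
  rw [hTk, h1.2.2.2] at s2
  simp at s2

lemma outcome_unique {σa : List (Vtx X Q) → Option (Vtx X Q)}
    {σe : Vtx X Q → Vtx X Q} {π1 π2 : List (Vtx X Q)}
    (h1 : IsOutcome M D K0 σa σe π1) (h2 : IsOutcome M D K0 σa σe π2) :
    π1 = π2 := by
  have hlen : π1.length = π2.length := by
    rcases Nat.lt_trichotomy π1.length π2.length with h | h | h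
    · exact absurd h (outcome_not_lt M D K0 h1 h2)
    · exact h
    · exact absurd h (outcome_not_lt M D K0 h2 h1)
  have hpos : 0 < π1.length := length_pos_of_head? h1.1.1
  have := outcome_take_eq M D K0 h1 h2 π1.length hpos (le_refl _) (by omega)
  rwa [List.take_length, hlen, List.take_length] at this

lemma outcome_eq {σa : List (Vtx X Q) → Option (Vtx X Q)}
    {σe : Vtx X Q → Vtx X Q} {π : List (Vtx X Q)}
    (h : IsOutcome M D K0 σa σe π) : outcome M D K0 σa σe = π := by
  unfold outcome
  rw [dif_pos ⟨π, h⟩]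
  exact outcome_unique M D K0 (Exists.choose_spec (⟨π, h⟩ : ∃ π', IsOutcome M D K0 σa σe π')) h

end Aux3
section Aux4
open Classical
set_option linter.unusedSectionVars false
set_option maxHeartbeats 1000000

variable {X Q AP : Type} [DecidableEq X] [Fintype X] [Fintype Q] [Fintype AP]
  [Inhabited X] [Inhabited Q]
variable (M : PKWTS X AP) (D : DFAut Q AP) (K0 : List (X × Finset X))
variable (σaF : List (Vtx X Q) → Option (Vtx X Q))
variable (hW : ∀ σe ∈ SE M D, ∃ π, IsOutcome M D K0 σaF σe π ∧ InVF D π.getLast!)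

/-- The outcome play of `σaF` against the environment strategy induced by `c`. -/
noncomputable def piT (c : CompatEnv M) : List (Vtx X Q) :=
  (hW (envOf M D c) (envOf_mem_SE M D c)).choose

lemma piT_spec (c : CompatEnv M) :
    IsOutcome M D K0 σaF (envOf M D c) (piT M D K0 σaF hW c) ∧
      InVF D (piT M D K0 σaF hW c).getLast! :=
  (hW (envOf M D c) (envOf_mem_SE M D c)).choose_spec

lemma piT_len_pos (c : CompatEnv M) : 0 < (piT M D K0 σaF hW c).length :=
  length_pos_of_head? (piT_spec M D K0 σaF hW c).1.1.1

lemma piT_ne_nil (c : CompatEnv M) : piT M D K0 σaF hW c ≠ [] := by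
  have := piT_len_pos M D K0 σaF hW c
  intro h; rw [h] at this; simp at this

lemma piT_chain (c : CompatEnv M) : (piT M D K0 σaF hW c).Chain' (Edge M D) :=
  (piT_spec M D K0 σaF hW c).1.1.2

lemma piT_zero (c : CompatEnv M) :
    (piT M D K0 σaF hW c)[0]'(piT_len_pos M D K0 σaF hW c) = v0 M D K0 := by
  obtain ⟨h0, he⟩ := head?_eq_getElem0 (piT_spec M D K0 σaF hW c).1.1.1
  exact he

lemma piT_last_ag (c : CompatEnv M) :
    IsAgV ((piT M D K0 σaF hW c)[(piT M D K0 σaF hW c).length - 1]'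
      (by have := piT_len_pos M D K0 σaF hW c; omega)) := by
  have h := (piT_spec M D K0 σaF hW c).1.2.2.1
  rwa [getLast!_eq_getElem (piT_ne_nil M D K0 σaF hW c)] at h

lemma piT_last_VF (c : CompatEnv M) :
    InVF D ((piT M D K0 σaF hW c)[(piT M D K0 σaF hW c).length - 1]'
      (by have := piT_len_pos M D K0 σaF hW c; omega)) := by
  have h := (piT_spec M D K0 σaF hW c).2
  rwa [getLast!_eq_getElem (piT_ne_nil M D K0 σaF hW c)] at h

lemma piT_ag_step (c : CompatEnv M) {i : ℕ} (h : i + 1 < (piT M D K0 σaF hW c).length)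
    (hag : IsAgV ((piT M D K0 σaF hW c)[i]'(Nat.lt_of_succ_lt h))) :
    σaF ((piT M D K0 σaF hW c).take (i+1)) = some ((piT M D K0 σaF hW c)[i+1]'h) :=
  ((piT_spec M D K0 σaF hW c).1.2.1 i h).1 hag

lemma piT_env_step (c : CompatEnv M) {i : ℕ} (h : i + 1 < (piT M D K0 σaF hW c).length)
    (henv : IsEnvV ((piT M D K0 σaF hW c)[i]'(Nat.lt_of_succ_lt h))) :
    envOf M D c ((piT M D K0 σaF hW c)[i]'(Nat.lt_of_succ_lt h))
      = (piT M D K0 σaF hW c)[i+1]'h :=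
  ((piT_spec M D K0 σaF hW c).1.2.1 i h).2 henv

lemma piT_none (c : CompatEnv M) : σaF (piT M D K0 σaF hW c) = none :=
  (piT_spec M D K0 σaF hW c).1.2.2.2

/-- knowledge recorded along `piT c` agrees with `c`. -/
lemma piT_K_inv (hinit : IsInitK M K0) (c : CompatEnv M) :
    ∀ i (hi : i < (piT M D K0 σaF hW c).length),
      ∀ p ∈ Kof ((piT M D K0 σaF hW c)[i]'hi), c.1 p.1 = p.2 := by
  intro i
  induction i with
  | zero =>
    intro hi p hp
    rw [piT_zero M D K0 σaF hW c] at hp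
    have hp0 : p ∈ K0 := hp
    have := hinit.2.1 p hp0
    have hc := c.2 p.1
    rw [this] at hc
    simpa using hc
  | succ k ih =>
    intro hi p hp
    have hk : k < (piT M D K0 σaF hW c).length := by omega
    rcases agV_or_envV ((piT M D K0 σaF hW c)[k]'hk) with hag | henv
    · have hE := chain'_getElem (piT_chain M D K0 σaF hW c) hi
      obtain ⟨x, q, K, hu⟩ := agV_elim hag
      rw [hu] at hE
      obtain ⟨_, hK, _⟩ := edge_from_ag M D hE
      rw [hK] at hp
      apply ih hk
      rw [hu]
      exact hp
    · have hstep := piT_env_step M D K0 σaF hW c hi henv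
      obtain ⟨x, q, K, xh, hu⟩ := envV_elim henv
      rw [← hstep, hu] at hp
      have hp' : p ∈ kupdate K (xh, c.1 xh) := hp
      rcases mem_kupdate hp' with hmem | rfl
      · apply ih hk
        rw [hu]
        exact hmem
      · rfl

/-- Prefix-transfer: a prefix of `piT c` all of whose recorded knowledge is
compatible with `c'` is also a prefix of `piT c'`. -/
lemma piT_transfer (hinit : IsInitK M K0) (c c' : CompatEnv M) :
    ∀ i, ∀ hi : i < (piT M D K0 σaF hW c).length,
      (∀ p ∈ Kof ((piT M D K0 σaF hW c)[i]'hi), c'.1 p.1 = p.2) →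
      i < (piT M D K0 σaF hW c').length ∧
        (piT M D K0 σaF hW c').take (i+1) = (piT M D K0 σaF hW c).take (i+1) := by
  intro i
  induction i with
  | zero =>
    intro hi H
    refine ⟨piT_len_pos M D K0 σaF hW c', ?_⟩
    rw [take1_of_head? (piT_spec M D K0 σaF hW c').1.1.1,
      take1_of_head? (piT_spec M D K0 σaF hW c).1.1.1]
  | succ k ih =>
    intro hi H
    have hk : k < (piT M D K0 σaF hW c).length := by omega
    have H' : ∀ p ∈ Kof ((piT M D K0 σaF hW c)[k]'hk), c'.1 p.1 = p.2 := by
      intro p hp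
      exact H p (kof_mono_play M D (piT_chain M D K0 σaF hW c) (by omega) hi hp)
    obtain ⟨hlen', htk⟩ := ih hk H'
    have hElem : (piT M D K0 σaF hW c')[k]'hlen' = (piT M D K0 σaF hW c)[k]'hk :=
      getElem_eq_of_take_eq htk (by omega) (by omega) (by omega)
    have hlt : k + 1 < (piT M D K0 σaF hW c').length := by
      rcases Nat.lt_or_ge (k+1) (piT M D K0 σaF hW c').length with h | h
      · exact h
      · exfalso
        have hke : k + 1 = (piT M D K0 σaF hW c').length := by omega
        have hfull : piT M D K0 σaF hW c' = (piT M D K0 σaF hW c).take (k+1) := by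
          rw [← htk, hke, List.take_length]
        rcases agV_or_envV ((piT M D K0 σaF hW c)[k]'hk) with hag | henv
        · have hs := piT_ag_step M D K0 σaF hW c hi hag
          rw [← hfull, piT_none M D K0 σaF hW c'] at hs
          simp at hs
        · have hlast := piT_last_ag M D K0 σaF hW c'
          have e : (piT M D K0 σaF hW c')[(piT M D K0 σaF hW c').length - 1]'(by
              have := piT_len_pos M D K0 σaF hW c'; omega) =
              (piT M D K0 σaF hW c')[k]'hlen' := getElem_congr_idx (by omega)
          rw [e, hElem] at hlast
          obtain ⟨x, q, K, xh, hu⟩ := envV_elim henv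
          rw [hu] at hlast
          exact hlast
    have hkth : (piT M D K0 σaF hW c')[k+1]'hlt = (piT M D K0 σaF hW c)[k+1]'hi := by
      rcases agV_or_envV ((piT M D K0 σaF hW c)[k]'hk) with hag | henv
      · have hs := piT_ag_step M D K0 σaF hW c hi hag
        have hs' := piT_ag_step M D K0 σaF hW c' hlt (by rw [hElem]; exact hag)
        rw [htk, hs] at hs'
        exact (Option.some.inj hs').symm
      · have hs := piT_env_step M D K0 σaF hW c hi henv
        have hs' := piT_env_step M D K0 σaF hW c' hlt (by rw [hElem]; exact henv)
        obtain ⟨x, q, KK, xh, hu⟩ := envV_elim henv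
        have heq : envOf M D c' ((piT M D K0 σaF hW c)[k]'hk) =
            envOf M D c ((piT M D K0 σaF hW c)[k]'hk) := by
          rw [hu]
          show Vtx.ag xh (D.f q (M.L x)) (kupdate KK (xh, c'.1 xh))
            = Vtx.ag xh (D.f q (M.L x)) (kupdate KK (xh, c.1 xh))
          by_cases hex : Explored KK xh
          · rw [kupdate_of_explored hex, kupdate_of_explored hex]
          · have hmem : (xh, c.1 xh) ∈ Kof ((piT M D K0 σaF hW c)[k+1]'hi) := by
              rw [← hs, hu]
              show _ ∈ kupdate KK (xh, c.1 xh)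
              rw [kupdate_of_not_explored hex]
              simp
            have := H (xh, c.1 xh) hmem
            rw [this]
        rw [← hs, ← hs', hElem, heq]
    refine ⟨hlt, ?_⟩
    rw [take_succ_getElem (l := piT M D K0 σaF hW c') hlt,
      take_succ_getElem (l := piT M D K0 σaF hW c) hi, htk, hkth]

end Aux4
section Aux5
open Classical
set_option linter.unusedSectionVars false
set_option maxHeartbeats 1000000

variable {X Q AP : Type} [DecidableEq X] [Fintype X] [Fintype Q] [Fintype AP]
  [Inhabited X] [Inhabited Q]
variable (M : PKWTS X AP) (D : DFAut Q AP) (K0 : List (X × Finset X))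
variable (σaF : List (Vtx X Q) → Option (Vtx X Q))
variable (hW : ∀ σe ∈ SE M D, ∃ π, IsOutcome M D K0 σaF σe π ∧ InVF D π.getLast!)

noncomputable instance : Fintype (CompatEnv M) :=
  @Subtype.fintype _ _ (Classical.decPred _) _

/-- Bound on the lengths of the plays `piT c`. -/
noncomputable def NN : ℕ := Finset.univ.sup (fun c : CompatEnv M => (piT M D K0 σaF hW c).length)

lemma piT_len_le (c : CompatEnv M) : (piT M D K0 σaF hW c).length ≤ NN M D K0 σaF hW := by
  unfold NN
  exact Finset.le_sup (f := fun c : CompatEnv M => (piT M D K0 σaF hW c).length)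
    (Finset.mem_univ c)

/-- Cost of the prefix of `piT c` up to position `i`. -/
noncomputable def pcost (p : CompatEnv M × ℕ) : ℝ :=
  costG M ((piT M D K0 σaF hW p.1).take (p.2 + 1))

noncomputable def Keys : Finset ℝ :=
  (Finset.univ ×ˢ Finset.range (NN M D K0 σaF hW + 1)).image (pcost M D K0 σaF hW)

/-- All occurrences of the vertex `u` on the plays `piT c`. -/
noncomputable def Sfin (u : Vtx X Q) : Finset (CompatEnv M × ℕ) :=
  (Finset.univ ×ˢ Finset.range (NN M D K0 σaF hW + 1)).filter
    (fun p => (piT M D K0 σaF hW p.1)[p.2]? = some u)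

lemma mem_Sfin_intro {u : Vtx X Q} {c : CompatEnv M} {i : ℕ}
    (hi : i < (piT M D K0 σaF hW c).length) (he : (piT M D K0 σaF hW c)[i]'hi = u) :
    (c, i) ∈ Sfin M D K0 σaF hW u := by
  unfold Sfin
  rw [Finset.mem_filter]
  refine ⟨Finset.mem_product.2 ⟨Finset.mem_univ _, Finset.mem_range.2 ?_⟩, ?_⟩
  · have := piT_len_le M D K0 σaF hW c; omega
  · rw [List.getElem?_eq_getElem hi, he]

lemma mem_Sfin_elim {u : Vtx X Q} {p : CompatEnv M × ℕ}
    (hp : p ∈ Sfin M D K0 σaF hW u) :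
    ∃ h : p.2 < (piT M D K0 σaF hW p.1).length, (piT M D K0 σaF hW p.1)[p.2]'h = u := by
  unfold Sfin at hp
  rw [Finset.mem_filter] at hp
  have := hp.2
  rw [List.getElem?_eq_some_iff] at this
  exact this

lemma pcost_mem_Keys {u : Vtx X Q} {p : CompatEnv M × ℕ}
    (hp : p ∈ Sfin M D K0 σaF hW u) : pcost M D K0 σaF hW p ∈ Keys M D K0 σaF hW := by
  unfold Sfin at hp
  exact Finset.mem_image_of_mem _ (Finset.mem_filter.1 hp).1

/-- The selection key: maximize prefix cost, then minimize remaining length. -/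
noncomputable def skey (p : CompatEnv M × ℕ) : ℝ ×ₗ ℕ :=
  toLex (- pcost M D K0 σaF hW p, (piT M D K0 σaF hW p.1).length - p.2)

noncomputable def chooseCI (u : Vtx X Q) (h : (Sfin M D K0 σaF hW u).Nonempty) :
    CompatEnv M × ℕ :=
  (Finset.exists_min_image (Sfin M D K0 σaF hW u) (skey M D K0 σaF hW) h).choose

lemma chooseCI_mem (u : Vtx X Q) (h : (Sfin M D K0 σaF hW u).Nonempty) :
    chooseCI M D K0 σaF hW u h ∈ Sfin M D K0 σaF hW u :=
  (Finset.exists_min_image (Sfin M D K0 σaF hW u) (skey M D K0 σaF hW) h).choose_spec.1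

lemma chooseCI_min (u : Vtx X Q) (h : (Sfin M D K0 σaF hW u).Nonempty) :
    ∀ p ∈ Sfin M D K0 σaF hW u,
      skey M D K0 σaF hW (chooseCI M D K0 σaF hW u h) ≤ skey M D K0 σaF hW p :=
  (Finset.exists_min_image (Sfin M D K0 σaF hW u) (skey M D K0 σaF hW) h).choose_spec.2

/-- Maximal prefix cost over occurrences of `u`. -/
noncomputable def maxP (u : Vtx X Q) (h : (Sfin M D K0 σaF hW u).Nonempty) : ℝ :=
  pcost M D K0 σaF hW (chooseCI M D K0 σaF hW u h)

lemma maxP_max {u : Vtx X Q} (h : (Sfin M D K0 σaF hW u).Nonempty)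
    {p : CompatEnv M × ℕ} (hp : p ∈ Sfin M D K0 σaF hW u) :
    pcost M D K0 σaF hW p ≤ maxP M D K0 σaF hW u h := by
  have := chooseCI_min M D K0 σaF hW u h p hp
  have h1 := Prod.Lex.monotone_fst _ _ this
  simp only [skey] at h1
  have : - maxP M D K0 σaF hW u h ≤ - pcost M D K0 σaF hW p := h1
  linarith

noncomputable def remLen (u : Vtx X Q) (h : (Sfin M D K0 σaF hW u).Nonempty) : ℕ :=
  (piT M D K0 σaF hW (chooseCI M D K0 σaF hW u h).1).length - (chooseCI M D K0 σaF hW u h).2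

lemma remLen_min {u : Vtx X Q} (h : (Sfin M D K0 σaF hW u).Nonempty)
    {p : CompatEnv M × ℕ} (hp : p ∈ Sfin M D K0 σaF hW u)
    (hpc : pcost M D K0 σaF hW p = maxP M D K0 σaF hW u h) :
    remLen M D K0 σaF hW u h ≤ (piT M D K0 σaF hW p.1).length - p.2 := by
  have := chooseCI_min M D K0 σaF hW u h p hp
  simp only [skey] at this
  rw [Prod.Lex.le_iff] at this
  rcases this with h1 | h1
  · exfalso
    change - maxP M D K0 σaF hW u h < - pcost M D K0 σaF hW p at h1
    rw [hpc] at h1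
    linarith
  · exact h1.2

/-- The positional strategy. -/
noncomputable def sigPos (u : Vtx X Q) : Option (Vtx X Q) :=
  if h : (Sfin M D K0 σaF hW u).Nonempty then
    (if h2 : (chooseCI M D K0 σaF hW u h).2 + 1 <
        (piT M D K0 σaF hW (chooseCI M D K0 σaF hW u h).1).length then
      some ((piT M D K0 σaF hW (chooseCI M D K0 σaF hW u h).1)[(chooseCI M D K0 σaF hW u h).2 + 1]'h2)
    else none)
  else none

lemma sigPos_edge {u v : Vtx X Q} (h : sigPos M D K0 σaF hW u = some v) :
    Edge M D u v := by
  unfold sigPos at h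
  split at h
  · rename_i hne
    split at h
    · rename_i h2
      obtain ⟨hlt, he⟩ := mem_Sfin_elim M D K0 σaF hW (chooseCI_mem M D K0 σaF hW u hne)
      have hE := chain'_getElem (piT_chain M D K0 σaF hW _) h2
      rw [he] at hE
      rw [← Option.some.inj h]
      exact hE
    · simp at h
  · simp at h

/-- number of explored states recorded at a vertex -/
noncomputable def expCard (u : Vtx X Q) : ℕ := ((Kof u).map Prod.fst).toFinset.card

lemma expCard_le_of_subset {u u' : Vtx X Q} (h : ∀ p ∈ Kof u, p ∈ Kof u') :
    expCard u ≤ expCard u' := by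
  apply Finset.card_le_card
  intro x hx
  rw [List.mem_toFinset, List.mem_map] at hx ⊢
  obtain ⟨p, hp, hpx⟩ := hx
  exact ⟨p, h p hp, hpx⟩

lemma expCard_le_card (u : Vtx X Q) : expCard u ≤ Fintype.card X :=
  Finset.card_le_univ _

/-- termination measure -/
noncomputable def nu (u : Vtx X Q) : ℕ :=
  if h : (Sfin M D K0 σaF hW u).Nonempty then
    ((Fintype.card X - expCard u) * ((Keys M D K0 σaF hW).card + 1) +
        ((Keys M D K0 σaF hW).filter (fun r => maxP M D K0 σaF hW u h < r)).card) *
      (NN M D K0 σaF hW + 3) + remLen M D K0 σaF hW u h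
  else 0

lemma nat_measure_step {nn A' A r r' : ℕ} (h : A' < A) (hr' : r' ≤ nn + 2) :
    A' * (nn+3) + r' < A * (nn+3) + r := by
  calc A' * (nn+3) + r' < A' * (nn+3) + (nn+3) := by omega
    _ = (A' + 1) * (nn+3) := by ring
    _ ≤ A * (nn+3) := Nat.mul_le_mul_right _ (by omega)
    _ ≤ A * (nn+3) + r := by omega

lemma nat_measure_lt {kk nn a a' b b' r r' : ℕ}
    (hcase : a' < a ∨ (a' = a ∧ b' < b) ∨ (a' = a ∧ b' = b ∧ r' < r))
    (hb : b ≤ kk) (hb' : b' ≤ kk) (hr' : r' ≤ nn + 2) :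
    (a' * (kk+1) + b') * (nn+3) + r' < (a * (kk+1) + b) * (nn+3) + r := by
  rcases hcase with h | ⟨heq, h⟩ | ⟨heq1, heq2, h⟩
  · refine nat_measure_step ?_ hr'
    have h1 : a' * (kk+1) + b' < (a' + 1) * (kk+1) := by
      have : b' < kk + 1 := by omega
      calc a' * (kk+1) + b' < a' * (kk+1) + (kk+1) := by omega
        _ = (a' + 1) * (kk+1) := by ring
    have h2 : (a' + 1) * (kk + 1) ≤ a * (kk+1) := Nat.mul_le_mul_right _ (by omega)
    omega
  · subst heq
    exact nat_measure_step (by omega) hr'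
  · subst heq1; subst heq2
    omega

end Aux5
section Aux6
open Classical
set_option linter.unusedSectionVars false
set_option maxHeartbeats 2000000

variable {X Q AP : Type} [DecidableEq X] [Fintype X] [Fintype Q] [Fintype AP]
  [Inhabited X] [Inhabited Q]
variable (M : PKWTS X AP) (D : DFAut Q AP) (K0 : List (X × Finset X))
variable (σaF : List (Vtx X Q) → Option (Vtx X Q))
variable (hW : ∀ σe ∈ SE M D, ∃ π, IsOutcome M D K0 σaF σe π ∧ InVF D π.getLast!)

local notation "PT" => piT M D K0 σaF hW
local notation "SF" => Sfin M D K0 σaF hW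
local notation "PC" => pcost M D K0 σaF hW
local notation "MP" => maxP M D K0 σaF hW
local notation "RL" => remLen M D K0 σaF hW
local notation "NU" => nu M D K0 σaF hW
local notation "KY" => Keys M D K0 σaF hW
local notation "SP" => sigPos M D K0 σaF hW
local notation "CH" => chooseCI M D K0 σaF hW

lemma wG_from_ag (x : X) (q : Q) (K : List (X × Finset X)) (v : Vtx X Q) :
    wG M (Vtx.ag x q K) v = 0 := by
  cases v <;> rfl

lemma piT_env_succ_lt (c : CompatEnv M) {i : ℕ} (hi : i < (PT c).length)
    (henv : IsEnvV ((PT c)[i]'hi)) : i + 1 < (PT c).length := by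
  rcases Nat.lt_or_ge (i+1) (PT c).length with hlt | hge
  · exact hlt
  · exfalso
    have hlast := piT_last_ag M D K0 σaF hW c
    have e : (PT c)[(PT c).length - 1]'(by have := piT_len_pos M D K0 σaF hW c; omega)
        = (PT c)[i]'hi := getElem_congr_idx (by omega)
    rw [e] at hlast
    obtain ⟨x, q, K, xh, hu⟩ := envV_elim henv
    rw [hu] at hlast
    exact hlast

lemma main_ex (hinit : IsInitK M K0) (σe : Vtx X Q → Vtx X Q) (hσe : σe ∈ SE M D) :
    ∀ n i, ∀ hi : i < (PT (cOf M D σe hσe)).length,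
      IsAgV ((PT (cOf M D σe hσe))[i]'hi) →
      NU ((PT (cOf M D σe hσe))[i]'hi) ≤ n →
      ∃ tail : List (Vtx X Q), tail ≠ [] ∧
        tail.head? = some ((PT (cOf M D σe hσe))[i]'hi) ∧
        tail.Chain' (fun a b => Edge M D a b ∧ (IsAgV a → SP a = some b) ∧
          (IsEnvV a → σe a = b)) ∧
        (∃ uf, tail.getLast? = some uf ∧ IsAgV uf ∧ SP uf = none ∧ InVF D uf) ∧
        costG M tail ≤ costG M (PT (cOf M D σe hσe)) -
          costG M ((PT (cOf M D σe hσe)).take (i+1)) := by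
  intro n
  induction n using Nat.strong_induction_on with
  | _ n IH =>
  intro i hi hag hν
  -- abbreviations
  set c' : CompatEnv M := cOf M D σe hσe with hc'
  have hu_mem : (c', i) ∈ SF ((PT c')[i]'hi) := mem_Sfin_intro M D K0 σaF hW hi rfl
  have h : (SF ((PT c')[i]'hi)).Nonempty := ⟨(c', i), hu_mem⟩
  obtain ⟨his, hus⟩ := mem_Sfin_elim M D K0 σaF hW (chooseCI_mem M D K0 σaF hW _ h)
  set j : ℕ := (CH ((PT c')[i]'hi) h).2 with hj
  set cs : CompatEnv M := (CH ((PT c')[i]'hi) h).1 with hcs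
  -- knowledge compatibility at position j of PT cs
  have Hs : ∀ p ∈ Kof ((PT cs)[j]'his), c'.1 p.1 = p.2 := by
    intro p hp
    rw [hus] at hp
    exact piT_K_inv M D K0 σaF hW hinit c' i hi p hp
  have htr := piT_transfer M D K0 σaF hW hinit cs c' j his Hs
  have hpc_eq : costG M ((PT c').take (j+1)) = PC (cs, j) := by
    show costG M ((PT c').take (j+1)) = costG M ((PT cs).take (j+1))
    rw [htr.2]
  have hmaxP_ge : costG M ((PT c').take (i+1)) ≤ MP ((PT c')[i]'hi) h :=
    maxP_max M D K0 σaF hW h hu_mem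
  have hmaxP_def : MP ((PT c')[i]'hi) h = PC (cs, j) := rfl
  by_cases hgo : j + 1 < (PT cs).length
  · -- continuation case
    have hσaPos : SP ((PT c')[i]'hi) = some ((PT cs)[j+1]'hgo) := by
      unfold sigPos
      rw [dif_pos h, dif_pos hgo]
    have hEdge_uv : Edge M D ((PT c')[i]'hi) ((PT cs)[j+1]'hgo) := by
      have := chain'_getElem (piT_chain M D K0 σaF hW cs) hgo
      rwa [hus] at this
    obtain ⟨x, q, K, hu_ag⟩ := agV_elim hag
    have hv_env := edge_from_ag M D (by rw [← hu_ag]; exact hEdge_uv)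
    have hKofu : Kof ((PT c')[i]'hi) = K := by rw [hu_ag]; rfl
    have H2 : ∀ p ∈ Kof ((PT cs)[j+1]'hgo), c'.1 p.1 = p.2 := by
      intro p hp
      rw [hv_env.2.1] at hp
      apply Hs
      rw [hus, hKofu]
      exact hp
    have htr2 := piT_transfer M D K0 σaF hW hinit cs c' (j+1) hgo H2
    have hv' : (PT c')[j+1]'htr2.1 = (PT cs)[j+1]'hgo :=
      getElem_eq_of_take_eq htr2.2 (by omega) (by omega) (by omega)
    have henv' : IsEnvV ((PT c')[j+1]'htr2.1) := by rw [hv']; exact hv_env.1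
    have hlt2 : j + 2 < (PT c').length := by
      have := piT_env_succ_lt M D K0 σaF hW c' htr2.1 henv'
      omega
    have hstep_env : envOf M D c' ((PT c')[j+1]'htr2.1) = (PT c')[j+2]'hlt2 := by
      have hes := piT_env_step M D K0 σaF hW c'
        (show (j+1)+1 < (PT c').length by omega) henv'
      rw [hes]
    have hσe_step : σe ((PT c')[j+1]'htr2.1) = (PT c')[j+2]'hlt2 := by
      rw [se_eq_envOf M D hσe _ henv', ← hc']
      exact hstep_env
    have hEdge_vu' : Edge M D ((PT c')[j+1]'htr2.1) ((PT c')[j+2]'hlt2) := by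
      have := chain'_getElem (piT_chain M D K0 σaF hW c')
        (show (j+1)+1 < (PT c').length by omega)
      have e : (PT c')[(j+1)+1]'(by omega) = (PT c')[j+2]'hlt2 := getElem_congr_idx (by omega)
      rwa [e] at this
    have hag' : IsAgV ((PT c')[j+2]'hlt2) := by
      obtain ⟨xv, qv, Kv, xh, hv_eq⟩ := envV_elim henv'
      have := edge_from_env M D (by rw [← hv_eq]; exact hEdge_vu')
      exact this.1
    have hmem' : (c', j+2) ∈ SF ((PT c')[j+2]'hlt2) := mem_Sfin_intro M D K0 σaF hW hlt2 rfl
    have h' : (SF ((PT c')[j+2]'hlt2)).Nonempty := ⟨(c', j+2), hmem'⟩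
    -- identify the structure of the environment vertex v and of u'
    obtain ⟨xv, qv, Kv, xh, hv_eq⟩ := envV_elim hv_env.1
    have hKv : Kv = K := by
      have := hv_env.2.1
      rw [hv_eq] at this
      exact this
    have hu'_eq : (PT c')[j+2]'hlt2
        = Vtx.ag xh (D.f qv (M.L xv)) (kupdate K (xh, c'.1 xh)) := by
      rw [← hstep_env, hv', hv_eq, ← hKv]
      rfl
    -- prefix cost relations on PT c'
    have hj_el : (PT c')[j]'(by omega) = (PT c')[i]'hi := by
      have := getElem_eq_of_take_eq htr.2 (show j < j+1 by omega)
        (show j < (PT c').length by omega) (show j < (PT cs).length by omega)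
      rw [this, hus]
    have e2 : costG M ((PT c').take (j+2)) = costG M ((PT c').take (j+1)) +
        wG M ((PT c')[j]'(by omega)) ((PT c')[j+1]'htr2.1) := by
      have := costG_take_succ M (l := PT c') (i := j) (by omega)
      convert this using 3 <;> omega
    have e3 : costG M ((PT c').take (j+3)) = costG M ((PT c').take (j+2)) +
        wG M ((PT c')[j+1]'htr2.1) ((PT c')[j+2]'hlt2) := by
      have := costG_take_succ M (l := PT c') (i := j+1) (by omega)
      convert this using 3 <;> omega
    have hwuv : wG M ((PT c')[j]'(by omega)) ((PT c')[j+1]'htr2.1) = 0 := by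
      rw [hj_el, hu_ag, wG_from_ag]
    -- the measure decreases
    have hν' : NU ((PT c')[j+2]'hlt2) < NU ((PT c')[i]'hi) := by
      unfold nu
      rw [dif_pos h', dif_pos h]
      have hexp_le : expCard ((PT c')[i]'hi) ≤ expCard ((PT c')[j+2]'hlt2) := by
        apply expCard_le_of_subset
        intro p hp
        rw [hKofu] at hp
        rw [hu'_eq]
        exact mem_kupdate_of_mem hp
      have hb : ((KY).filter (fun r => MP ((PT c')[i]'hi) h < r)).card ≤ (KY).card :=
        Finset.card_filter_le _ _
      have hb' : ((KY).filter (fun r => MP ((PT c')[j+2]'hlt2) h' < r)).card ≤ (KY).card :=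
        Finset.card_filter_le _ _
      have hr' : RL ((PT c')[j+2]'hlt2) h' ≤ NN M D K0 σaF hW + 2 := by
        have h1 : RL ((PT c')[j+2]'hlt2) h' ≤ (PT (CH ((PT c')[j+2]'hlt2) h').1).length := by
          unfold remLen; omega
        have h2 := piT_len_le M D K0 σaF hW (CH ((PT c')[j+2]'hlt2) h').1
        omega
      apply nat_measure_lt _ hb hb' hr'
      by_cases hex : Explored K xh
      · -- no new exploration: u' is also on PT cs
        have hKu' : Kof ((PT c')[j+2]'hlt2) = K := by
          rw [hu'_eq]
          show kupdate K (xh, c'.1 xh) = K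
          exact kupdate_of_explored hex _
        have hexp_eq : expCard ((PT c')[j+2]'hlt2) = expCard ((PT c')[i]'hi) := by
          unfold expCard
          rw [hKu', hKofu]
        have henv_s : IsEnvV ((PT cs)[j+1]'hgo) := by rw [hv_eq]; trivial
        have hlt_s : j + 2 < (PT cs).length := by
          have := piT_env_succ_lt M D K0 σaF hW cs hgo henv_s
          omega
        have hstep_s : envOf M D cs ((PT cs)[j+1]'hgo) = (PT cs)[j+2]'hlt_s := by
          have hes := piT_env_step M D K0 σaF hW cs
            (show (j+1)+1 < (PT cs).length by omega) henv_s
          rw [hes]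
        have hu'_s : (PT cs)[j+2]'hlt_s = (PT c')[j+2]'hlt2 := by
          rw [← hstep_s, hu'_eq, hv_eq]
          show Vtx.ag xh (D.f qv (M.L xv)) (kupdate Kv (xh, cs.1 xh)) = _
          rw [hKv, kupdate_of_explored hex, kupdate_of_explored hex]
        have hmem_s : (cs, j+2) ∈ SF ((PT c')[j+2]'hlt2) :=
          mem_Sfin_intro M D K0 σaF hW hlt_s hu'_s
        have hpcs : PC (cs, j) ≤ PC (cs, j+2) := by
          have e2s : costG M ((PT cs).take (j+2)) = costG M ((PT cs).take (j+1)) +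
              wG M ((PT cs)[j]'(by omega)) ((PT cs)[j+1]'hgo) := by
            have := costG_take_succ M (l := PT cs) (i := j) (by omega)
            convert this using 3 <;> omega
          have e3s : costG M ((PT cs).take (j+3)) = costG M ((PT cs).take (j+2)) +
              wG M ((PT cs)[j+1]'hgo) ((PT cs)[j+2]'hlt_s) := by
            have := costG_take_succ M (l := PT cs) (i := j+1) (by omega)
            convert this using 3 <;> omega
          have hw1 : (0:ℝ) ≤ wG M ((PT cs)[j]'(by omega)) ((PT cs)[j+1]'hgo) :=
            wG_nonneg M _ _
          have hw2 : (0:ℝ) ≤ wG M ((PT cs)[j+1]'hgo) ((PT cs)[j+2]'hlt_s) :=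
            wG_nonneg M _ _
          show costG M ((PT cs).take (j+1)) ≤ costG M ((PT cs).take (j+2+1))
          have e : (PT cs).take (j+2+1) = (PT cs).take (j+3) := by norm_num
          rw [e, e3s, e2s]
          linarith
        have hge : MP ((PT c')[i]'hi) h ≤ MP ((PT c')[j+2]'hlt2) h' := by
          rw [hmaxP_def]
          exact le_trans hpcs (maxP_max M D K0 σaF hW h' hmem_s)
        rcases lt_or_eq_of_le hge with hmlt | hmeq
        · refine Or.inr (Or.inl ⟨by rw [hexp_eq], ?_⟩)
          apply Finset.card_lt_card
          rw [Finset.ssubset_def]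
          constructor
          · intro r hr
            rw [Finset.mem_filter] at hr ⊢
            exact ⟨hr.1, lt_trans hmlt hr.2⟩
          · intro hsub
            have hmemKY : MP ((PT c')[j+2]'hlt2) h' ∈ KY :=
              pcost_mem_Keys M D K0 σaF hW (chooseCI_mem M D K0 σaF hW _ h')
            have hmemR : MP ((PT c')[j+2]'hlt2) h' ∈
                (KY).filter (fun r => MP ((PT c')[i]'hi) h < r) :=
              Finset.mem_filter.2 ⟨hmemKY, hmlt⟩
            have := (Finset.mem_filter.1 (hsub hmemR)).2
            exact lt_irrefl _ this
        · refine Or.inr (Or.inr ⟨by rw [hexp_eq], by rw [hmeq], ?_⟩)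
          have hpceq : PC (cs, j+2) = MP ((PT c')[j+2]'hlt2) h' := by
            refine le_antisymm (maxP_max M D K0 σaF hW h' hmem_s) ?_
            rw [← hmeq, hmaxP_def]
            exact hpcs
          have hrl : RL ((PT c')[j+2]'hlt2) h' ≤ (PT cs).length - (j+2) :=
            remLen_min M D K0 σaF hW h' hmem_s hpceq
          have hrlu : RL ((PT c')[i]'hi) h = (PT cs).length - j := rfl
          rw [hrlu]
          have : (PT cs).length - (j+2) < (PT cs).length - j := by omega
          omega
      · -- new exploration
        refine Or.inl ?_
        have hnotin : xh ∉ ((Kof ((PT c')[i]'hi)).map Prod.fst).toFinset := by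
          rw [hKofu]
          intro hmem
          rw [List.mem_toFinset, List.mem_map] at hmem
          obtain ⟨p, hp, hpx⟩ := hmem
          refine hex ⟨p.2, ?_⟩
          rw [← hpx, Prod.mk.eta]
          exact hp
        have hKu2 : Kof ((PT c')[j+2]'hlt2) = K ++ [(xh, c'.1 xh)] := by
          rw [hu'_eq]
          show kupdate K (xh, c'.1 xh) = _
          exact kupdate_of_not_explored hex _
        have hins : ((Kof ((PT c')[j+2]'hlt2)).map Prod.fst).toFinset
            = insert xh ((K.map Prod.fst).toFinset) := by
          rw [hKu2, List.map_append, List.toFinset_append]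
          simp only [List.map_cons, List.map_nil, List.toFinset_cons, List.toFinset_nil]
          rw [Finset.union_comm]
          ext y; simp
        have hcard : expCard ((PT c')[i]'hi) < expCard ((PT c')[j+2]'hlt2) := by
          unfold expCard
          rw [hins, hKofu]
          rw [hKofu] at hnotin
          rw [Finset.card_insert_of_notMem hnotin]
          omega
        have hle1 := expCard_le_card ((PT c')[j+2]'hlt2) (X := X)
        omega
    -- apply the induction hypothesis at u'
    obtain ⟨tail', htne, hthead, htchain, ⟨uf, hufl, hufag, hufnone, hufVF⟩, htcost⟩ :=
      IH (NU ((PT c')[j+2]'hlt2)) (lt_of_lt_of_le hν' hν) (j+2) hlt2 hag' (le_refl _)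
    obtain ⟨u'', rest, rfl⟩ : ∃ a r, tail' = a :: r := by
      cases tail' with
      | nil => exact absurd rfl htne
      | cons a r => exact ⟨a, r, rfl⟩
    have hu'' : u'' = (PT c')[j+2]'hlt2 := by simpa using hthead
    refine ⟨(PT c')[i]'hi :: (PT cs)[j+1]'hgo :: u'' :: rest, by simp, by simp; rfl, ?_, ?_, ?_⟩
    · rw [List.Chain', List.isChain_cons_cons, List.isChain_cons_cons]
      refine ⟨⟨hEdge_uv, fun _ => hσaPos, fun hx => ?_⟩,
        ⟨?_, fun hx => ?_, fun _ => ?_⟩, htchain⟩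
      · rw [hu_ag] at hx
        simp [IsEnvV] at hx
      · rw [hu'', ← hv']
        exact hEdge_vu'
      · rw [hv_eq] at hx
        simp [IsAgV] at hx
      · rw [hu'', ← hv']
        exact hσe_step
    · refine ⟨uf, ?_, hufag, hufnone, hufVF⟩
      rw [List.getLast?_cons_cons, List.getLast?_cons_cons]
      exact hufl
    · rw [costG_cons_cons, costG_cons_cons]
      have hw0 : wG M ((PT c')[i]'hi) ((PT cs)[j+1]'hgo) = 0 := by
        rw [hu_ag, wG_from_ag]
      have hwvu : wG M ((PT cs)[j+1]'hgo) u''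
          = wG M ((PT c')[j+1]'htr2.1) ((PT c')[j+2]'hlt2) := by
        rw [hu'', hv']
      have e : (PT c').take (j+2+1) = (PT c').take (j+3) := by norm_num
      rw [e] at htcost
      rw [hmaxP_def] at hmaxP_ge
      linarith [e3, e2, hwuv, hpc_eq, htcost, hmaxP_ge, hw0, hwvu]
  · -- stopping case
    have hstop : j + 1 = (PT cs).length := by omega
    have hσaPos : SP ((PT c')[i]'hi) = none := by
      unfold sigPos
      rw [dif_pos h, dif_neg hgo]
    have hVF : InVF D ((PT c')[i]'hi) := by
      have := piT_last_VF M D K0 σaF hW cs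
      have e : (PT cs)[(PT cs).length - 1]'(by have := piT_len_pos M D K0 σaF hW cs; omega)
          = (PT cs)[j]'his := getElem_congr_idx (by omega)
      rw [e, hus] at this
      exact this
    refine ⟨[(PT c')[i]'hi], by simp, by simp; rfl, List.isChain_singleton _,
      ⟨(PT c')[i]'hi, by simp, hag, hσaPos, hVF⟩, ?_⟩
    simp only [costG_singleton]
    have := costG_take_le M (PT c') (i+1)
    linarith
end Aux6
section Aux7
open Classical
set_option linter.unusedSectionVars false
set_option maxHeartbeats 1000000

variable {X Q AP : Type} [DecidableEq X] [Fintype X] [Fintype Q] [Fintype AP]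
  [Inhabited X] [Inhabited Q]
variable (M : PKWTS X AP) (D : DFAut Q AP) (K0 : List (X × Finset X))
variable (σaF : List (Vtx X Q) → Option (Vtx X Q))
variable (hW : ∀ σe ∈ SE M D, ∃ π, IsOutcome M D K0 σaF σe π ∧ InVF D π.getLast!)

local notation "PT" => piT M D K0 σaF hW
local notation "SP" => sigPos M D K0 σaF hW

lemma getLast!_eq_of_getLast? {α : Type*} [Inhabited α] {l : List α} {a : α}
    (h : l.getLast? = some a) : l.getLast! = a := by
  have hne : l ≠ [] := by intro e; rw [e] at h; simp at h
  have hpos : 0 < l.length := List.length_pos_iff.2 hne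
  rw [getLast!_eq_getElem hne]
  rw [List.getLast?_eq_getElem?, List.getElem?_eq_getElem (by omega)] at h
  exact Option.some.inj h

/-- The positional strategy as a function on plays. -/
noncomputable def sigA : List (Vtx X Q) → Option (Vtx X Q) :=
  fun π => (π.getLast?).bind SP

lemma sigA_outcome (hinit : IsInitK M K0) (σe : Vtx X Q → Vtx X Q) (hσe : σe ∈ SE M D) :
    ∃ π, IsOutcome M D K0 (sigA M D K0 σaF hW) σe π ∧ InVF D π.getLast! ∧
      costG M π ≤ costG M (PT (cOf M D σe hσe)) := by
  have h0 : 0 < (PT (cOf M D σe hσe)).length := piT_len_pos M D K0 σaF hW _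
  have hag0 : IsAgV ((PT (cOf M D σe hσe))[0]'h0) := by
    rw [piT_zero M D K0 σaF hW]
    trivial
  obtain ⟨tail, htne, hthead, htchain, ⟨uf, hufl, hufag, hufnone, hufVF⟩, htcost⟩ :=
    main_ex M D K0 σaF hW hinit σe hσe (nu M D K0 σaF hW ((PT (cOf M D σe hσe))[0]'h0))
      0 h0 hag0 (le_refl _)
  have hlast! : tail.getLast! = uf := getLast!_eq_of_getLast? hufl
  refine ⟨tail, ⟨⟨?_, ?_⟩, ?_, ?_, ?_⟩, ?_, ?_⟩
  · rw [hthead, piT_zero M D K0 σaF hW]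
  · exact List.IsChain.imp (fun a b hab => hab.1) htchain
  · intro k hk
    have hR := chain'_getElem htchain hk
    constructor
    · intro hagk
      have hg : (tail.take (k+1)).getLast? = some (tail[k]'(Nat.lt_of_succ_lt hk)) :=
        getLast?_take (Nat.lt_of_succ_lt hk)
      show (tail.take (k+1)).getLast?.bind SP = _
      rw [hg]
      simp only [Option.bind_some]
      exact hR.2.1 hagk
    · exact fun henvk => hR.2.2 henvk
  · rw [hlast!]; exact hufag
  · show tail.getLast?.bind SP = none
    rw [hufl]
    simp only [Option.bind_some]
    exact hufnone
  · rw [hlast!]; exact hufVF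
  · have ht1 : (PT (cOf M D σe hσe)).take 1 = [v0 M D K0] := by
      apply take1_of_head?
      exact (piT_spec M D K0 σaF hW _).1.1.1
    rw [ht1] at htcost
    simpa using htcost

lemma outcomeF_eq (σe : Vtx X Q → Vtx X Q) (hσe : σe ∈ SE M D) :
    outcome M D K0 σaF σe = PT (cOf M D σe hσe) := by
  apply outcome_eq
  exact (isOutcome_congr M D K0 (fun v hv => se_eq_envOf M D hσe v hv)).mpr
    (piT_spec M D K0 σaF hW _).1

lemma outcome_indep (σa : List (Vtx X Q) → Option (Vtx X Q)) (σe : Vtx X Q → Vtx X Q)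
    (hσe : σe ∈ SE M D) :
    outcome M D K0 σa σe = outcome M D K0 σa (envOf M D (cOf M D σe hσe)) := by
  have hpred : IsOutcome M D K0 σa σe = IsOutcome M D K0 σa (envOf M D (cOf M D σe hσe)) :=
    funext fun π => propext (isOutcome_congr M D K0 (fun v hv => se_eq_envOf M D hσe v hv))
  unfold outcome
  rw [hpred]

lemma bestCost_indep (σe : Vtx X Q → Vtx X Q) (hσe : σe ∈ SE M D) :
    bestCost M D K0 σe = bestCost M D K0 (envOf M D (cOf M D σe hσe)) := by
  unfold bestCost
  congr 1
  ext r
  constructor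
  · rintro ⟨σa, hσa, hc⟩
    exact ⟨σa, hσa, by rw [← outcome_indep M D K0 σa σe hσe]; exact hc⟩
  · rintro ⟨σa, hσa, hc⟩
    exact ⟨σa, hσa, by rw [outcome_indep M D K0 σa σe hσe]; exact hc⟩

end Aux7
/-- every winning agent strategy is dominated (cost-wise, hence
regret-wise) by a positional winning agent strategy. -/
theorem positional_dominates
    (hinit : IsInitK M K0)
    (hSA : (SA M D K0).Nonempty)
    (σaF : List (Vtx X Q) → Option (Vtx X Q)) (hF : σaF ∈ SA M D K0) :
    ∃ σa ∈ SA M D K0, PositionalA σa ∧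
      (∀ σe ∈ SE M D,
        costG M (outcome M D K0 σa σe) ≤ costG M (outcome M D K0 σaF σe)) ∧
      (∀ σe ∈ SE M D,
        regAgainst M D K0 σa σe ≤ regAgainst M D K0 σaF σe) ∧
      regG M D K0 σa ≤ regG M D K0 σaF := by
  classical
  have hW : ∀ σe ∈ SE M D, ∃ π, IsOutcome M D K0 σaF σe π ∧ InVF D π.getLast! := hF.2
  refine ⟨sigA M D K0 σaF hW, ⟨?_, ?_⟩, ?_, ?_, ?_, ?_⟩
  · -- validity
    intro π u v hplay hlast hag hsome
    have : (π.getLast?).bind (sigPos M D K0 σaF hW) = some v := hsome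
    rw [hlast] at this
    simp only [Option.bind_some] at this
    exact sigPos_edge M D K0 σaF hW this
  · -- winning
    intro σe hσe
    obtain ⟨π, ho, hVF, _⟩ := sigA_outcome M D K0 σaF hW hinit σe hσe
    exact ⟨π, ho, hVF⟩
  · -- positional
    intro π π' hEq
    show (π.getLast?).bind _ = (π'.getLast?).bind _
    rw [hEq]
  · -- cost domination
    intro σe hσe
    obtain ⟨π, ho, hVF, hc⟩ := sigA_outcome M D K0 σaF hW hinit σe hσe
    rw [outcome_eq M D K0 ho, outcomeF_eq M D K0 σaF hW σe hσe]
    exact hc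
  · -- regret against each environment
    intro σe hσe
    unfold regAgainst
    obtain ⟨π, ho, hVF, hc⟩ := sigA_outcome M D K0 σaF hW hinit σe hσe
    rw [outcome_eq M D K0 ho, outcomeF_eq M D K0 σaF hW σe hσe]
    exact sub_le_sub_right hc _
  · -- global regret
    have hcost : ∀ σe ∈ SE M D,
        regAgainst M D K0 (sigA M D K0 σaF hW) σe ≤ regAgainst M D K0 σaF σe := by
      intro σe hσe
      unfold regAgainst
      obtain ⟨π, ho, hVF, hc⟩ := sigA_outcome M D K0 σaF hW hinit σe hσe
      rw [outcome_eq M D K0 ho, outcomeF_eq M D K0 σaF hW σe hσe]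
      exact sub_le_sub_right hc _
    unfold regG
    -- the set of regrets of σaF is bounded above
    have hsub : {r | ∃ σe ∈ SE M D, regAgainst M D K0 σaF σe = r} ⊆
        Set.range (fun c : CompatEnv M => regAgainst M D K0 σaF (envOf M D c)) := by
      rintro r ⟨σe, hσe, rfl⟩
      refine ⟨cOf M D σe hσe, ?_⟩
      show regAgainst M D K0 σaF (envOf M D (cOf M D σe hσe)) = regAgainst M D K0 σaF σe
      unfold regAgainst
      rw [← outcome_indep M D K0 σaF σe hσe, ← bestCost_indep M D K0 σe hσe]
    have hBdd : BddAbove {r | ∃ σe ∈ SE M D, regAgainst M D K0 σaF σe = r} :=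
      BddAbove.mono hsub (Set.finite_range _).bddAbove
    -- nonemptiness
    have c0 : CompatEnv M := ⟨fun x => (M.Δ_nonempty x).choose, fun x => (M.Δ_nonempty x).choose_spec⟩
    have hσe0 : envOf M D c0 ∈ SE M D := envOf_mem_SE M D c0
    have hAne : {r | ∃ σe ∈ SE M D, regAgainst M D K0 (sigA M D K0 σaF hW) σe = r}.Nonempty :=
      ⟨regAgainst M D K0 (sigA M D K0 σaF hW) (envOf M D c0), ⟨envOf M D c0, hσe0, rfl⟩⟩
    apply csSup_le hAne
    rintro r ⟨σe, hσe, rfl⟩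
    exact le_trans (hcost σe hσe) (le_csSup hBdd ⟨σe, hσe, rfl⟩)

end RegretLTL
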